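/- For any poset (X, ≤), any word w in X*, and any set T ⊆ {1, …, n−1} (where n = |w|), the number of words w' equivalent to w with DES(w') ⊆ T equals the number of words w' equivalent to w with ASC(w') ⊆ T. -/

import Mathlib

/-- Adjacency in the free monoid over a poset: swap of two adjacent,
distinct and comparable letters. -/
inductive PCM.Adj {X : Type*} [PartialOrder X] : List X → List X → Prop
  | swap (u v : List X) (a b : X) (hne : a ≠ b) (hcomp : a ≤ b ∨ b ≤ a) :
      PCM.Adj (u ++ a :: b :: v) (u ++ b :: a :: v)

/-- Equivalence in the partially commutative monoid `L(X, ≤)`. -/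
def PCM.Equiv {X : Type*} [PartialOrder X] (w w' : List X) : Prop :=
  Relation.ReflTransGen PCM.Adj w w'

/-- Descent set: positions `i`, `1 ≤ i ≤ n-1`, with `x_i > x_{i+1}`. -/
def PCM.DES {X : Type*} [PartialOrder X] (w : List X) : Set ℕ :=
  {i | ∃ h : i < w.length, 0 < i ∧ w[i]'h < w[i - 1]'(by omega)}

/-- Rise set: positions `i`, `1 ≤ i ≤ n-1`, with `x_i < x_{i+1}`. -/
def PCM.ASC {X : Type*} [PartialOrder X] (w : List X) : Set ℕ :=
  {i | ∃ h : i < w.length, 0 < i ∧ w[i - 1]'(by omega) < w[i]'h}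

/-!
Sort by swapping adjacent ascents `a < b` into `b a` at positions outside `T`. Such a swap stays in
the equivalence class and removes an inversion, and two swaps can always be rejoined (overlapping
ones by transitivity of `<`), so by Newman's lemma every word has a unique normal form: a word
whose ascents all lie in `T`. On the words of a class with descents in `T` the normal-form map is a
bijection onto the words with ascents in `T`, with inverse the normal-form map of the reverse
system, which sorts descents outside `T`.
-/

namespace Relation

variable {α : Type*} {R : α → α → Prop}

def IsNormalForm (R : α → α → Prop) (a : α) : Prop := ∀ b, ¬ R a b

def LocallyConfluent (R : α → α → Prop) : Prop :=
  ∀ ⦃a b c⦄, R a b → R a c → Join (ReflTransGen R) b c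

theorem exists_isNormalForm (hwf : WellFounded (flip R)) (a : α) :
    ∃ b, ReflTransGen R a b ∧ IsNormalForm R b := by
  induction a using hwf.induction with
  | _ a ih =>
    by_cases ha : IsNormalForm R a
    · exact ⟨a, .refl, ha⟩
    · obtain ⟨a', haa'⟩ := not_forall_not.mp ha
      obtain ⟨b, hab, hb⟩ := ih a' haa'
      exact ⟨b, .head haa' hab, hb⟩

theorem IsNormalForm.eq_of_reflTransGen {a b : α} (ha : IsNormalForm R a)
    (h : ReflTransGen R a b) : a = b := by
  rcases h.cases_head with rfl | ⟨c, hac, -⟩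
  · rfl
  · exact absurd hac (ha c)

/-- Newman's lemma. -/
theorem eq_of_reflTransGen_of_isNormalForm (hwf : WellFounded (flip R))
    (hlc : LocallyConfluent R) {a x y : α} (hx : ReflTransGen R a x) (hy : ReflTransGen R a y)
    (hxn : IsNormalForm R x) (hyn : IsNormalForm R y) : x = y := by
  induction a using hwf.induction generalizing x y with
  | _ a ih =>
    rcases hx.cases_head with rfl | ⟨x₁, hax₁, hx₁x⟩
    · exact hxn.eq_of_reflTransGen hy
    rcases hy.cases_head with rfl | ⟨y₁, hay₁, hy₁y⟩
    · exact (hyn.eq_of_reflTransGen hx).symm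
    obtain ⟨d, hx₁d, hy₁d⟩ := hlc hax₁ hay₁
    obtain ⟨e, hde, he⟩ := exists_isNormalForm hwf d
    exact (ih x₁ hax₁ hx₁x (hx₁d.trans hde) hxn he).trans
      (ih y₁ hay₁ hy₁y (hy₁d.trans hde) hyn he).symm

noncomputable def normalForm (hwf : WellFounded (flip R)) (a : α) : α :=
  (exists_isNormalForm hwf a).choose

theorem reflTransGen_normalForm (hwf : WellFounded (flip R)) (a : α) :
    ReflTransGen R a (normalForm hwf a) :=
  (exists_isNormalForm hwf a).choose_spec.1

theorem isNormalForm_normalForm (hwf : WellFounded (flip R)) (a : α) :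
    IsNormalForm R (normalForm hwf a) :=
  (exists_isNormalForm hwf a).choose_spec.2

theorem normalForm_eq (hwf : WellFounded (flip R)) (hlc : LocallyConfluent R) {a b : α}
    (h : ReflTransGen R a b) (hb : IsNormalForm R b) : normalForm hwf a = b :=
  eq_of_reflTransGen_of_isNormalForm hwf hlc (reflTransGen_normalForm hwf a) h
    (isNormalForm_normalForm hwf a) hb

theorem ncard_isNormalForm_flip_eq (hwf : WellFounded (flip R)) (hwf' : WellFounded R)
    (hlc : LocallyConfluent R) (hlc' : LocallyConfluent (flip R)) {C : Set α}
    (hC : ∀ ⦃a b⦄, R a b → (a ∈ C ↔ b ∈ C)) :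
    {a ∈ C | IsNormalForm (flip R) a}.ncard = {a ∈ C | IsNormalForm R a}.ncard := by
  have hmem : ∀ ⦃a b⦄, ReflTransGen R a b → (a ∈ C ↔ b ∈ C) := fun a b h => by
    induction h with
    | refl => rfl
    | tail _ hbc ih => exact ih.trans (hC hbc)
  refine Set.BijOn.ncard_eq (f := normalForm hwf) ⟨?_, ?_, ?_⟩
  · rintro a ⟨ha, -⟩
    exact ⟨(hmem (reflTransGen_normalForm hwf a)).mp ha, isNormalForm_normalForm hwf a⟩
  · rintro a ⟨-, ha⟩ b ⟨-, hb⟩ hab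
    have hb' := reflTransGen_normalForm hwf b
    rw [← hab] at hb'
    exact eq_of_reflTransGen_of_isNormalForm (R := flip R) hwf' hlc'
      (reflTransGen_swap.mpr (reflTransGen_normalForm hwf a)) (reflTransGen_swap.mpr hb') ha hb
  · rintro b ⟨hbC, hb⟩
    have hba := reflTransGen_normalForm (R := flip R) hwf' b
    refine ⟨normalForm hwf' b, ⟨(hmem (reflTransGen_swap.mp hba)).mpr hbC,
      isNormalForm_normalForm hwf' b⟩, normalForm_eq hwf hlc (reflTransGen_swap.mp hba) hb⟩

end Relation

open Relation

section SortStep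

variable {α : Type*} {r : α → α → Prop} {T : Set ℕ}

/-- The swapped pair sits at 0-based indices `|u|, |u| + 1`, that is at position `|u| + 1` in the
convention of `PCM.DES` and `PCM.ASC`. -/
inductive SortStep (r : α → α → Prop) (T : Set ℕ) : List α → List α → Prop
  | swap (u v : List α) (a b : α) (hab : r a b) (hT : u.length + 1 ∉ T) :
      SortStep r T (u ++ a :: b :: v) (u ++ b :: a :: v)

def ascentSet (r : α → α → Prop) (w : List α) : Set ℕ :=
  {i | ∃ h : i < w.length, 0 < i ∧ r (w[i - 1]'(by omega)) (w[i]'h)}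

theorem SortStep.of_eq {w w' : List α} (u v : List α) {a b : α} (hab : r a b)
    (hT : u.length + 1 ∉ T) (hw : w = u ++ a :: b :: v) (hw' : w' = u ++ b :: a :: v) :
    SortStep r T w w' :=
  hw ▸ hw' ▸ .swap u v a b hab hT

theorem sortStep_iff {w w' : List α} : SortStep r T w w' ↔
    ∃ u v a b, r a b ∧ u.length + 1 ∉ T ∧ w = u ++ a :: b :: v ∧ w' = u ++ b :: a :: v := by
  constructor
  · rintro ⟨u, v, a, b, hab, hT⟩
    exact ⟨u, v, a, b, hab, hT, rfl, rfl⟩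
  · rintro ⟨u, v, a, b, hab, hT, rfl, rfl⟩
    exact .swap u v a b hab hT

theorem flip_sortStep : flip (SortStep r T) = SortStep (flip r) T := by
  ext w w'
  constructor
  · rintro ⟨u, v, a, b, hab, hT⟩
    exact .swap u v b a hab hT
  · rintro ⟨u, v, a, b, hab, hT⟩
    exact .swap u v b a hab hT

def inversions (r : α → α → Prop) [DecidableRel r] : List α → ℕ
  | [] => 0
  | a :: l => l.countP (fun b => r a b) + inversions r l

theorem inversions_swap_lt [DecidableRel r] {a b : α} (hab : r a b) (hba : ¬ r b a)
    (u v : List α) : inversions r (u ++ b :: a :: v) < inversions r (u ++ a :: b :: v) := by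
  induction u with
  | nil =>
    simp only [List.nil_append, inversions, List.countP_cons_of_pos, List.countP_cons_of_neg, hab,
      hba, decide_true, decide_false, Bool.false_eq_true, not_false_eq_true]
    omega
  | cons c u ih =>
    have hperm := ((List.Perm.swap a b v).append_left u).countP_eq (fun x => decide (r c x))
    simp only [List.cons_append, inversions, hperm]
    omega

theorem wellFounded_flip_sortStep [Std.Asymm r] : WellFounded (flip (SortStep r T)) := by
  classical
  refine Subrelation.wf ?_ (measure (inversions r)).wf
  rintro _ _ ⟨u, v, a, b, hab, -⟩
  exact inversions_swap_lt hab (asymm hab) u v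

theorem SortStep.join_of_disjoint {u k v : List α} {a b c d : α} (hab : r a b) (hcd : r c d)
    (hT₁ : u.length + 1 ∉ T) (hT₂ : u.length + k.length + 3 ∉ T) :
    Join (ReflTransGen (SortStep r T)) (u ++ b :: a :: (k ++ c :: d :: v))
      (u ++ a :: b :: k ++ d :: c :: v) :=
  ⟨u ++ b :: a :: k ++ d :: c :: v,
    .single (.of_eq (u ++ b :: a :: k) v hcd (by simpa [add_assoc] using hT₂) (by simp) (by simp)),
    .single (.of_eq u (k ++ d :: c :: v) hab hT₁ (by simp) (by simp))⟩

theorem SortStep.join_of_overlap [IsTrans α r] {u v : List α} {a b c : α} (hab : r a b)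
    (hbc : r b c) (hT₁ : u.length + 1 ∉ T) (hT₂ : u.length + 2 ∉ T) :
    Join (ReflTransGen (SortStep r T)) (u ++ b :: a :: c :: v) (u ++ a :: c :: b :: v) := by
  have hac : r a c := _root_.trans hab hbc
  refine ⟨u ++ c :: b :: a :: v, .head (b := u ++ b :: c :: a :: v) ?_ (.single ?_),
    .head (b := u ++ c :: a :: b :: v) ?_ (.single ?_)⟩
  · exact .of_eq (u ++ [b]) v hac (by simpa using hT₂) (by simp) (by simp)
  · exact .of_eq u (a :: v) hbc hT₁ rfl rfl
  · exact .of_eq u (b :: v) hac hT₁ rfl rfl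
  · exact .of_eq (u ++ [c]) v hab (by simpa using hT₂) (by simp) (by simp)

theorem SortStep.join_of_append_eq [IsTrans α r] {u k v₁ v₂ : List α} {a₁ b₁ a₂ b₂ : α}
    (h₁ : r a₁ b₁) (h₂ : r a₂ b₂) (hT₁ : u.length + 1 ∉ T) (hT₂ : (u ++ k).length + 1 ∉ T)
    (hk : a₁ :: b₁ :: v₁ = k ++ a₂ :: b₂ :: v₂) :
    Join (ReflTransGen (SortStep r T)) (u ++ b₁ :: a₁ :: v₁) (u ++ k ++ b₂ :: a₂ :: v₂) := by
  rcases k with _ | ⟨c, _ | ⟨c', k⟩⟩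
  · obtain ⟨rfl, rfl, rfl⟩ : a₁ = a₂ ∧ b₁ = b₂ ∧ v₁ = v₂ := by simpa using hk
    exact ⟨_, .refl, by rw [List.append_nil]⟩
  · obtain ⟨rfl, rfl, rfl⟩ : a₁ = c ∧ b₁ = a₂ ∧ v₁ = b₂ :: v₂ := by simpa using hk
    simpa using SortStep.join_of_overlap h₁ h₂ hT₁ (by simpa using hT₂)
  · obtain ⟨rfl, rfl, rfl⟩ : a₁ = c ∧ b₁ = c' ∧ v₁ = k ++ a₂ :: b₂ :: v₂ := by simpa using hk
    simpa using SortStep.join_of_disjoint h₁ h₂ hT₁ (by simpa [add_assoc] using hT₂)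

theorem SortStep.locallyConfluent [IsTrans α r] : LocallyConfluent (SortStep r T) := by
  rintro _ _ _ ⟨u₁, v₁, a₁, b₁, h₁, hT₁⟩ h
  obtain ⟨u₂, v₂, a₂, b₂, h₂, hT₂, hw, rfl⟩ := sortStep_iff.mp h
  rcases List.append_eq_append_iff.mp hw with ⟨k, rfl, hk⟩ | ⟨k, rfl, hk⟩
  · exact join_of_append_eq h₁ h₂ hT₁ hT₂ hk
  · exact _root_.symm (join_of_append_eq h₂ h₁ hT₂ hT₁ hk)

theorem List.eq_take_append_getElem_cons_getElem_cons_drop (w : List α) {i : ℕ}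
    (hi : i < w.length) (hpos : 0 < i) :
    w = w.take (i - 1) ++ w[i - 1] :: w[i] :: w.drop (i + 1) := by
  conv_lhs => rw [← List.take_append_drop (i - 1) w]
  rw [List.drop_eq_getElem_cons (by omega), Nat.sub_add_cancel hpos, List.drop_eq_getElem_cons hi]

theorem isNormalForm_sortStep_iff {w : List α} :
    IsNormalForm (SortStep r T) w ↔ ascentSet r w ⊆ T := by
  constructor
  · rintro hw i ⟨hi, hpos, hr⟩
    by_contra hiT
    refine hw _ (.of_eq (w.take (i - 1)) (w.drop (i + 1)) hr ?_
      (w.eq_take_append_getElem_cons_getElem_cons_drop hi hpos) rfl)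
    rwa [List.length_take, min_eq_left (by omega), Nat.sub_add_cancel hpos]
  · rintro hsub _ ⟨u, v, a, b, hab, hT⟩
    exact hT (hsub ⟨by simp, by omega, by simpa using hab⟩)

end SortStep

theorem PCM.Adj.symm {X : Type*} [PartialOrder X] {w w' : List X} (h : PCM.Adj w w') :
    PCM.Adj w' w := by
  obtain ⟨u, v, a, b, hne, hcomp⟩ := h
  exact .swap u v b a hne.symm hcomp.symm

theorem PCM.Adj.of_sortStep {X : Type*} [PartialOrder X] {T : Set ℕ} {w w' : List X}
    (h : SortStep (· < ·) T w w') : PCM.Adj w w' := by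
  obtain ⟨u, v, a, b, hab, -⟩ := h
  exact .swap u v a b hab.ne (.inl hab.le)

theorem stmt_3_general {X : Type*} [PartialOrder X] (w : List X) (T : Set ℕ) :
    {w' : List X | PCM.Equiv w w' ∧ PCM.DES w' ⊆ T}.ncard
      = {w' : List X | PCM.Equiv w w' ∧ PCM.ASC w' ⊆ T}.ncard := by
  have hwf' : WellFounded (SortStep (α := X) (· < ·) T) :=
    flip_sortStep ▸ wellFounded_flip_sortStep
  have hlc' : LocallyConfluent (flip (SortStep (α := X) (· < ·) T)) :=
    flip_sortStep ▸ SortStep.locallyConfluent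
  have hclass : ∀ ⦃a b⦄, SortStep (· < ·) T a b → (PCM.Equiv w a ↔ PCM.Equiv w b) :=
    fun _ _ h => ⟨fun ha => ha.tail (.of_sortStep h), fun hb => hb.tail (.symm (.of_sortStep h))⟩
  have key := ncard_isNormalForm_flip_eq wellFounded_flip_sortStep hwf'
    SortStep.locallyConfluent hlc' (C := {w' | PCM.Equiv w w'}) hclass
  simp only [flip_sortStep, isNormalForm_sortStep_iff] at key
  -- `PCM.DES` and `PCM.ASC` are `ascentSet (flip (· < ·))` and `ascentSet (· < ·)` unfolded.
  exact key

/-- For any `T ⊆ {1, …, n-1}`, the number of words equivalent to `w` whose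
descent set is contained in `T` equals the number of words equivalent to `w`
whose rise set is contained in `T`. -/
theorem stmt_3 {X : Type*} [PartialOrder X] (w : List X) (T : Set ℕ)
    (hT : T ⊆ Set.Icc 1 (w.length - 1)) :
    {w' : List X | PCM.Equiv w w' ∧ PCM.DES w' ⊆ T}.ncard
      = {w' : List X | PCM.Equiv w w' ∧ PCM.ASC w' ⊆ T}.ncard :=
  stmt_3_general w T
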